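/- arXiv:math/0701357 — 2 statements merged into one kernel-verified Lean document; each statement's English description precedes it below -/
import Mathlib

section
/- Let A = A₀ ⊕ A₁ be a prime superalgebra over a commutative unital ring φ with 1/2 ∈ φ, and let I be a nonzero two-sided ideal of the ring A₀. If x₁ ∈ A₁ is such that x₁² belongs to the center of I (that is, x₁² ∈ I and x₁² commutes with every element of I), then x₁² belongs to the center Z(A) of A. -/
open DirectSum

/-- The sign `(−1)^{ij}` for degrees `i j : ZMod 2`. -/
def ssign (i j : ZMod 2) : ℤ := if i = 1 ∧ j = 1 then -1 else 1

variable {φ A : Type*}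

section
variable [CommRing φ] [Ring A] [Algebra φ A]

/-- Superbracket `[x,y] = xy − (−1)^{ij} yx` of homogeneous elements of degrees `i`, `j`. -/
def sbr (i j : ZMod 2) (x y : A) : A := x * y - ssign i j • (y * x)

/-- Supercircle product `x∘y = xy + (−1)^{ij} yx` of homogeneous elements of degrees `i`, `j`. -/
def scirc (i j : ZMod 2) (x y : A) : A := x * y + ssign i j • (y * x)

/-- A graded two-sided ideal of the superalgebra `A = ⨁ 𝒜 i`. -/
structure SuperIdeal (𝒜 : ZMod 2 → Submodule φ A) [GradedAlgebra 𝒜] where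
  carrier : Submodule φ A
  mul_mem_left : ∀ (a x : A), x ∈ carrier → a * x ∈ carrier
  mul_mem_right : ∀ (a x : A), x ∈ carrier → x * a ∈ carrier
  graded' : ∀ (i : ZMod 2), ∀ x ∈ carrier, ((DirectSum.decompose 𝒜 x) i : A) ∈ carrier

variable (𝒜 : ZMod 2 → Submodule φ A)

/-- A superalgebra is prime if `I⬝J = 0` forces `I = 0` or `J = 0` for graded ideals `I`, `J`. -/
def SuperPrime [GradedAlgebra 𝒜] : Prop :=
  ∀ I J : SuperIdeal 𝒜, (∀ x ∈ I.carrier, ∀ y ∈ J.carrier, x * y = 0) →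
    I.carrier = ⊥ ∨ J.carrier = ⊥

/-- A superalgebra is semiprime if it has no nonzero graded ideal of square zero. -/
def SuperSemiprime [GradedAlgebra 𝒜] : Prop :=
  ∀ I : SuperIdeal 𝒜, (∀ x ∈ I.carrier, ∀ y ∈ I.carrier, x * y = 0) → I.carrier = ⊥

/-- `Z`, the even part of the center of `A`. -/
def evenCenter : Set A := {z : A | z ∈ 𝒜 0 ∧ ∀ x : A, z * x = x * z}

/-- A subset `M` of `A` is dense if the (non-unital) subalgebra of `A` generated by `M`
contains a nonzero ideal of `A`. -/
def IsDenseIn [GradedAlgebra 𝒜] (M : Set A) : Prop :=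
  ∃ J : SuperIdeal 𝒜, J.carrier ≠ ⊥ ∧
    (J.carrier : Set A) ⊆ NonUnitalAlgebra.adjoin φ M

/-- A superinvolution on the superalgebra `A`. -/
structure Superinvolution (𝒜 : ZMod 2 → Submodule φ A) where
  toFun : A →ₗ[φ] A
  grading : ∀ (i : ZMod 2), ∀ x ∈ 𝒜 i, toFun x ∈ 𝒜 i
  invol : ∀ x : A, toFun (toFun x) = x
  mul_rev : ∀ (i j : ZMod 2), ∀ x ∈ 𝒜 i, ∀ y ∈ 𝒜 j,
    toFun (x * y) = ssign i j • (toFun y * toFun x)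

/-- A Lie ideal of the Lie superalgebra `K` of skew elements of `(A,*)`: a graded
`φ`-submodule of `K` with `[U,K] ⊆ U`. -/
structure LieIdealOfSkew [GradedAlgebra 𝒜] (σ : Superinvolution 𝒜) where
  carrier : Submodule φ A
  skew : ∀ x ∈ carrier, σ.toFun x = -x
  graded' : ∀ (i : ZMod 2), ∀ x ∈ carrier, ((DirectSum.decompose 𝒜 x) i : A) ∈ carrier
  bracket_mem : ∀ (i j : ZMod 2) (u k : A), u ∈ carrier → u ∈ 𝒜 i →
    k ∈ 𝒜 j → σ.toFun k = -k → sbr i j u k ∈ carrier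

/-- The additive span of superbrackets of homogeneous elements of `S` and `T`. -/
def superBrAdd (S T : Set A) : AddSubgroup A :=
  AddSubgroup.closure
    {z : A | ∃ (i j : ZMod 2) (x y : A), x ∈ S ∧ x ∈ 𝒜 i ∧ y ∈ T ∧ y ∈ 𝒜 j ∧ z = sbr i j x y}

/-- The `φ`-submodule spanned by superbrackets of homogeneous elements of `S` and `T`. -/
def superBrSpan (S T : Set A) : Submodule φ A :=
  Submodule.span φ
    {z : A | ∃ (i j : ZMod 2) (x y : A), x ∈ S ∧ x ∈ 𝒜 i ∧ y ∈ T ∧ y ∈ 𝒜 j ∧ z = sbr i j x y}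

end

/-- Data exhibiting the prime superalgebra `A` as a central order in a simple superalgebra `B`
that is 4-dimensional over its center. -/
structure CentralOrderIn4DimSimple (φ : Type*) [CommRing φ] {A : Type*} [Ring A] [Algebra φ A]
    (𝒜 : ZMod 2 → Submodule φ A) [GradedAlgebra 𝒜] where
  B : Type
  [ringB : Ring B]
  [algB : Algebra φ B]
  ℬ : ZMod 2 → Submodule φ B
  [gradedB : GradedAlgebra ℬ]
  ι : A →ₐ[φ] B
  inj : Function.Injective ι
  grading : ∀ (i : ZMod 2), ∀ x ∈ 𝒜 i, ι x ∈ ℬ i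
  central_unit : ∀ z ∈ evenCenter 𝒜, z ≠ 0 → IsUnit (ι z)
  localized : ∀ b : B, ∃ z a : A, z ∈ evenCenter 𝒜 ∧ z ≠ 0 ∧ ι z * b = ι a
  sq_ne_zero : ∃ x y : B, x * y ≠ 0
  simple : ∀ J : SuperIdeal ℬ, J.carrier = ⊥ ∨ J.carrier = ⊤
  dim4 : Module.finrank (Subring.center B) B = 4

/-- `I` is a two-sided ideal of the (sub)ring `B` of `A`. -/
def IsTwoSidedIdealIn {A : Type*} [Ring A] (B I : Set A) : Prop :=
  I ⊆ B ∧ (0 : A) ∈ I ∧ (∀ x ∈ I, ∀ y ∈ I, x + y ∈ I) ∧ (∀ x ∈ I, -x ∈ I) ∧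
    ∀ b ∈ B, ∀ x ∈ I, b * x ∈ I ∧ x * b ∈ I

section Aux
variable [CommRing φ] [Ring A] [Algebra φ A]
  (𝒜 : ZMod 2 → Submodule φ A) [GradedAlgebra 𝒜]

theorem decompose_two (x : A) :
    x = ((DirectSum.decompose 𝒜 x) 0 : A) + ((DirectSum.decompose 𝒜 x) 1 : A) := by
  classical
  conv_lhs => rw [← DirectSum.sum_support_decompose 𝒜 x]
  rw [Finset.sum_subset (Finset.subset_univ ((DirectSum.decompose 𝒜 x).support))
    (fun i _ hi => by rw [DFinsupp.notMem_support_iff.mp hi, ZeroMemClass.coe_zero])]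
  have : (Finset.univ : Finset (ZMod 2)) = {0, 1} := by decide
  rw [this, Finset.sum_insert (by decide), Finset.sum_singleton]

/-- Generating set for the graded ideal generated by `a`. -/
def genSet (a : A) : Set A :=
  {x | ∃ (k l : ZMod 2) (u v : A), u ∈ 𝒜 k ∧ v ∈ 𝒜 l ∧ x = u * a * v}

theorem mul_left_mem_genSpan (a : A) (b x : A)
    (hx : x ∈ Submodule.span φ (genSet 𝒜 a)) :
    b * x ∈ Submodule.span φ (genSet 𝒜 a) := by
  induction hx using Submodule.span_induction with
  | mem x hxs =>
      obtain ⟨k, l, u, v, hu, hv, rfl⟩ := hxs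
      have hb := decompose_two 𝒜 b
      have h0 : ((DirectSum.decompose 𝒜 b) 0 : A) * (u * a * v) ∈ genSet 𝒜 a :=
        ⟨0 + k, l, ((DirectSum.decompose 𝒜 b) _ : A) * u, v, SetLike.mul_mem_graded (SetLike.coe_mem _) hu, hv, by simp only [mul_assoc]⟩
      have h1 : ((DirectSum.decompose 𝒜 b) 1 : A) * (u * a * v) ∈ genSet 𝒜 a :=
        ⟨1 + k, l, ((DirectSum.decompose 𝒜 b) _ : A) * u, v, SetLike.mul_mem_graded (SetLike.coe_mem _) hu, hv, by simp only [mul_assoc]⟩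
      have heq : b * (u * a * v)
          = ((DirectSum.decompose 𝒜 b) 0 : A) * (u * a * v)
            + ((DirectSum.decompose 𝒜 b) 1 : A) * (u * a * v) := by
        conv_lhs => rw [hb]
        rw [add_mul]
      rw [heq]
      exact Submodule.add_mem _ (Submodule.subset_span h0) (Submodule.subset_span h1)
  | zero => rw [mul_zero]; exact Submodule.zero_mem _
  | add x y hx hy ihx ihy => rw [mul_add]; exact Submodule.add_mem _ ihx ihy
  | smul r x hx ih => rw [mul_smul_comm]; exact Submodule.smul_mem _ _ ih

theorem mul_right_mem_genSpan (a : A) (b x : A)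
    (hx : x ∈ Submodule.span φ (genSet 𝒜 a)) :
    x * b ∈ Submodule.span φ (genSet 𝒜 a) := by
  induction hx using Submodule.span_induction with
  | mem x hxs =>
      obtain ⟨k, l, u, v, hu, hv, rfl⟩ := hxs
      have hb := decompose_two 𝒜 b
      have h0 : (u * a * v) * ((DirectSum.decompose 𝒜 b) 0 : A) ∈ genSet 𝒜 a :=
        ⟨k, l + 0, u, v * ((DirectSum.decompose 𝒜 b) _ : A), hu, SetLike.mul_mem_graded hv (SetLike.coe_mem _), by simp only [mul_assoc]⟩
      have h1 : (u * a * v) * ((DirectSum.decompose 𝒜 b) 1 : A) ∈ genSet 𝒜 a :=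
        ⟨k, l + 1, u, v * ((DirectSum.decompose 𝒜 b) _ : A), hu, SetLike.mul_mem_graded hv (SetLike.coe_mem _), by simp only [mul_assoc]⟩
      have heq : (u * a * v) * b
          = (u * a * v) * ((DirectSum.decompose 𝒜 b) 0 : A)
            + (u * a * v) * ((DirectSum.decompose 𝒜 b) 1 : A) := by
        conv_lhs => rw [hb]
        rw [mul_add]
      rw [heq]
      exact Submodule.add_mem _ (Submodule.subset_span h0) (Submodule.subset_span h1)
  | zero => rw [zero_mul]; exact Submodule.zero_mem _
  | add x y hx hy ihx ihy => rw [add_mul]; exact Submodule.add_mem _ ihx ihy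
  | smul r x hx ih => rw [smul_mul_assoc]; exact Submodule.smul_mem _ _ ih

theorem graded_genSpan {a : A} {i : ZMod 2} (ha : a ∈ 𝒜 i) (j : ZMod 2) (x : A)
    (hx : x ∈ Submodule.span φ (genSet 𝒜 a)) :
    ((DirectSum.decompose 𝒜 x) j : A) ∈ Submodule.span φ (genSet 𝒜 a) := by
  induction hx using Submodule.span_induction with
  | mem x hxs =>
      obtain ⟨k, l, u, v, hu, hv, rfl⟩ := hxs
      have hmem : u * a * v ∈ 𝒜 (k + i + l) :=
        SetLike.mul_mem_graded (SetLike.mul_mem_graded hu ha) hv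
      by_cases hj : j = k + i + l
      · subst hj
        rw [DirectSum.decompose_of_mem_same 𝒜 hmem]
        exact Submodule.subset_span ⟨k, l, u, v, hu, hv, rfl⟩
      · rw [DirectSum.decompose_of_mem_ne 𝒜 hmem (Ne.symm hj)]
        exact Submodule.zero_mem _
  | zero => rw [DirectSum.decompose_zero]; simpa using Submodule.zero_mem _
  | add x y hx hy ihx ihy =>
      rw [DirectSum.decompose_add]
      push_cast
      exact Submodule.add_mem _ ihx ihy
  | smul r x hx ih =>
      rw [DirectSum.decompose_smul]
      push_cast
      exact Submodule.smul_mem _ _ ih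

/-- The graded ideal generated by a homogeneous element. -/
def genSI {a : A} {i : ZMod 2} (ha : a ∈ 𝒜 i) : SuperIdeal 𝒜 where
  carrier := Submodule.span φ (genSet 𝒜 a)
  mul_mem_left := mul_left_mem_genSpan 𝒜 a
  mul_mem_right := mul_right_mem_genSpan 𝒜 a
  graded' := fun j x hx => graded_genSpan 𝒜 ha j x hx

theorem self_mem_genSI {a : A} {i : ZMod 2} (ha : a ∈ 𝒜 i) :
    a ∈ (genSI 𝒜 ha).carrier :=
  Submodule.subset_span ⟨0, 0, 1, 1, SetLike.one_mem_graded _, SetLike.one_mem_graded _,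
    by rw [one_mul, mul_one]⟩

theorem superPrime_elem (hprime : SuperPrime 𝒜)
    {i j : ZMod 2} {a b : A} (ha : a ∈ 𝒜 i) (hb : b ∈ 𝒜 j)
    (h : ∀ u : A, a * u * b = 0) : a = 0 ∨ b = 0 := by
  have key : ∀ x ∈ (genSI 𝒜 ha).carrier, ∀ y ∈ (genSI 𝒜 hb).carrier, x * y = 0 := by
    intro x hx
    induction hx using Submodule.span_induction with
    | mem x hxs =>
        intro y hy
        induction hy using Submodule.span_induction with
        | mem y hys =>
            obtain ⟨k, l, u, v, hu, hv, rfl⟩ := hxs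
            obtain ⟨k', l', u', v', hu', hv', rfl⟩ := hys
            have : u * a * v * (u' * b * v') = u * (a * (v * u') * b) * v' := by simp only [mul_assoc]
            rw [this, h, mul_zero, zero_mul]
        | zero => rw [mul_zero]
        | add y z hy hz ihy ihz => rw [mul_add, ihy, ihz, add_zero]
        | smul r y hy ih => rw [mul_smul_comm, ih, smul_zero]
    | zero => intro y hy; rw [zero_mul]
    | add x z hx hz ihx ihz => intro y hy; rw [add_mul, ihx y hy, ihz y hy, add_zero]
    | smul r x hx ih => intro y hy; rw [smul_mul_assoc, ih y hy, smul_zero]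
  rcases hprime _ _ key with hbot | hbot
  · left
    have := self_mem_genSI 𝒜 ha
    rw [hbot] at this
    simpa using this
  · right
    have := self_mem_genSI 𝒜 hb
    rw [hbot] at this
    simpa using this

end Aux

/-- Let `A = A₀ ⊕ A₁` be a prime superalgebra over a commutative ring `φ` with `½ ∈ φ`, and
let `I` be a nonzero two-sided ideal of the ring `A₀`. If `x₁ ∈ A₁` and `x₁²` belongs to the
center of `I`, then `x₁² ∈ Z(A)`. -/
theorem odd_square_in_center_of_even_ideal_central
    {φ A : Type*} [CommRing φ] [Invertible (2 : φ)] [Ring A] [Algebra φ A]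
    (𝒜 : ZMod 2 → Submodule φ A) [GradedAlgebra 𝒜]
    (hprime : SuperPrime 𝒜)
    (I : Set A) (hI : IsTwoSidedIdealIn (𝒜 0 : Set A) I) (hIne : I ≠ {0})
    (x₁ : A) (hx₁ : x₁ ∈ 𝒜 1)
    (hmem : x₁ * x₁ ∈ I)
    (hcomm : ∀ y ∈ I, (x₁ * x₁) * y = y * (x₁ * x₁)) :
    x₁ * x₁ ∈ Subring.center A := by
  obtain ⟨hIsub, hI0, hIadd, hIneg, hImul⟩ := hI
  have hc0 : x₁ * x₁ ∈ 𝒜 0 := by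
    have h := SetLike.mul_mem_graded hx₁ hx₁
    have h2 : (1 + 1 : ZMod 2) = 0 := by decide
    rwa [h2] at h
  by_cases hdeg : ∀ y ∈ I, ∀ z ∈ I, y * x₁ * z = 0
  · -- degenerate case: I x₁ I = 0; show x₁ * x₁ = 0
    -- Step A : x₁³ = 0
    have hpI : ∀ y ∈ I, x₁ * x₁ * x₁ * y = 0 := fun y hy => hdeg (x₁ * x₁) hmem y hy
    have hIp : ∀ y ∈ I, y * (x₁ * x₁ * x₁) = 0 := by
      intro y hy
      have h := hdeg y hy (x₁ * x₁) hmem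
      simp only [mul_assoc] at h ⊢
      exact h
    have hpAp : ∀ u : A, (x₁ * x₁ * x₁) * u * (x₁ * x₁ * x₁) = 0 := by
      have heven : ∀ u₀ ∈ 𝒜 0, (x₁ * x₁ * x₁) * u₀ * (x₁ * x₁ * x₁) = 0 := by
        intro u₀ hu₀
        have ht : u₀ * (x₁ * x₁) ∈ I := (hImul u₀ hu₀ (x₁ * x₁) hmem).1
        calc (x₁ * x₁ * x₁) * u₀ * (x₁ * x₁ * x₁)
            = ((x₁ * x₁ * x₁) * (u₀ * (x₁ * x₁))) * x₁ := by simp only [mul_assoc]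
          _ = 0 := by rw [hpI _ ht, zero_mul]
      have hodd : ∀ u₁ ∈ 𝒜 1, (x₁ * x₁ * x₁) * u₁ * (x₁ * x₁ * x₁) = 0 := by
        intro u₁ hu₁
        have hx₁u₁ : x₁ * u₁ ∈ 𝒜 0 := by
          have h := SetLike.mul_mem_graded hx₁ hu₁
          have h2 : (1 + 1 : ZMod 2) = 0 := by decide
          rwa [h2] at h
        have ht : (x₁ * x₁) * (x₁ * u₁) ∈ I := (hImul (x₁ * u₁) hx₁u₁ (x₁ * x₁) hmem).2
        calc (x₁ * x₁ * x₁) * u₁ * (x₁ * x₁ * x₁)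
            = ((x₁ * x₁) * (x₁ * u₁)) * (x₁ * x₁ * x₁) := by simp only [mul_assoc]
          _ = 0 := hIp _ ht
      intro u
      rw [decompose_two 𝒜 u, mul_add, add_mul,
        heven _ (SetLike.coe_mem _), hodd _ (SetLike.coe_mem _), add_zero]
    have hp3 : x₁ * x₁ * x₁ ∈ 𝒜 1 := by
      have h := SetLike.mul_mem_graded hc0 hx₁
      rwa [zero_add] at h
    have hp0 : x₁ * x₁ * x₁ = 0 :=
      (superPrime_elem 𝒜 hprime hp3 hp3 hpAp).elim id id
    -- Step B : c A₀ c = 0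
    have hc2 : (x₁ * x₁) * (x₁ * x₁) = 0 := by
      calc (x₁ * x₁) * (x₁ * x₁) = (x₁ * x₁ * x₁) * x₁ := by simp only [mul_assoc]
        _ = 0 := by rw [hp0, zero_mul]
    have hcA0c : ∀ u₀ ∈ 𝒜 0, (x₁ * x₁) * u₀ * (x₁ * x₁) = 0 := by
      intro u₀ hu₀
      have ht : u₀ * (x₁ * x₁) ∈ I := (hImul u₀ hu₀ (x₁ * x₁) hmem).1
      calc (x₁ * x₁) * u₀ * (x₁ * x₁)
          = (x₁ * x₁) * (u₀ * (x₁ * x₁)) := by simp only [mul_assoc]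
        _ = (u₀ * (x₁ * x₁)) * (x₁ * x₁) := hcomm _ ht
        _ = u₀ * ((x₁ * x₁) * (x₁ * x₁)) := by simp only [mul_assoc]
        _ = 0 := by rw [hc2, mul_zero]
    -- Step C : c A₁ c = 0
    have hcA1c : ∀ u₁ ∈ 𝒜 1, (x₁ * x₁) * u₁ * (x₁ * x₁) = 0 := by
      intro u₁ hu₁
      have h2 : (1 + 1 : ZMod 2) = 0 := by decide
      have hx₁u₁ : x₁ * u₁ ∈ 𝒜 0 := by
        have h := SetLike.mul_mem_graded hx₁ hu₁; rwa [h2] at h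
      have hu₁x₁ : u₁ * x₁ ∈ 𝒜 0 := by
        have h := SetLike.mul_mem_graded hu₁ hx₁; rwa [h2] at h
      have hs : (x₁ * u₁) * (x₁ * x₁) ∈ I := (hImul (x₁ * u₁) hx₁u₁ (x₁ * x₁) hmem).1
      have ht : (x₁ * x₁) * (u₁ * x₁) ∈ I := (hImul (u₁ * x₁) hu₁x₁ (x₁ * x₁) hmem).2
      -- m := (x₁*x₁)*u₁*(x₁*x₁)
      have hmz : ∀ z ∈ I, (x₁ * x₁) * u₁ * (x₁ * x₁) * z = 0 := by
        intro z hz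
        have h := hdeg _ ht z hz
        simp only [mul_assoc] at h ⊢
        exact h
      have hym : ∀ yy ∈ I, yy * ((x₁ * x₁) * u₁ * (x₁ * x₁)) = 0 := by
        intro yy hyy
        have h := hdeg yy hyy _ hs
        simp only [mul_assoc] at h ⊢
        exact h
      have hmwm : ∀ w : A,
          ((x₁ * x₁) * u₁ * (x₁ * x₁)) * w * ((x₁ * x₁) * u₁ * (x₁ * x₁)) = 0 := by
        have heven : ∀ w₀ ∈ 𝒜 0,
            ((x₁ * x₁) * u₁ * (x₁ * x₁)) * w₀ * ((x₁ * x₁) * u₁ * (x₁ * x₁)) = 0 := by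
          intro w₀ hw₀
          have hsw : ((x₁ * u₁) * (x₁ * x₁)) * w₀ ∈ I := (hImul w₀ hw₀ _ hs).2
          calc ((x₁ * x₁) * u₁ * (x₁ * x₁)) * w₀ * ((x₁ * x₁) * u₁ * (x₁ * x₁))
              = x₁ * ((((x₁ * u₁) * (x₁ * x₁)) * w₀) * ((x₁ * x₁) * u₁ * (x₁ * x₁))) := by
                simp only [mul_assoc]
            _ = 0 := by rw [hym _ hsw, mul_zero]
        have hodd : ∀ w₁ ∈ 𝒜 1,
            ((x₁ * x₁) * u₁ * (x₁ * x₁)) * w₁ * ((x₁ * x₁) * u₁ * (x₁ * x₁)) = 0 := by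
          intro w₁ hw₁
          have hx₁w₁ : x₁ * w₁ ∈ 𝒜 0 := by
            have h := SetLike.mul_mem_graded hx₁ hw₁; rwa [h2] at h
          have ht' : ((x₁ * x₁) * (u₁ * x₁)) * (x₁ * w₁) ∈ I :=
            (hImul (x₁ * w₁) hx₁w₁ _ ht).2
          calc ((x₁ * x₁) * u₁ * (x₁ * x₁)) * w₁ * ((x₁ * x₁) * u₁ * (x₁ * x₁))
              = (((x₁ * x₁) * (u₁ * x₁)) * (x₁ * w₁)) * x₁ * ((x₁ * u₁) * (x₁ * x₁)) := by
                simp only [mul_assoc]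
            _ = 0 := hdeg _ ht' _ hs
        intro w
        rw [decompose_two 𝒜 w, mul_add, add_mul,
          heven _ (SetLike.coe_mem _), hodd _ (SetLike.coe_mem _), add_zero]
      have hm1 : (x₁ * x₁) * u₁ * (x₁ * x₁) ∈ 𝒜 1 := by
        have h := SetLike.mul_mem_graded (SetLike.mul_mem_graded hc0 hu₁) hc0
        have h2' : (0 + 1 + 0 : ZMod 2) = 1 := by decide
        rwa [h2'] at h
      exact (superPrime_elem 𝒜 hprime hm1 hm1 hmwm).elim id id
    have hcAc : ∀ u : A, (x₁ * x₁) * u * (x₁ * x₁) = 0 := by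
      intro u
      rw [decompose_two 𝒜 u, mul_add, add_mul,
        hcA0c _ (SetLike.coe_mem _), hcA1c _ (SetLike.coe_mem _), add_zero]
    have hc00 : x₁ * x₁ = 0 :=
      (superPrime_elem 𝒜 hprime hc0 hc0 hcAc).elim id id
    rw [hc00]
    exact Subring.zero_mem _
  · -- main case
    push_neg at hdeg
    obtain ⟨y, hy, z, hz, hs0ne⟩ := hdeg
    have hy0 : y ∈ 𝒜 0 := hIsub hy
    have hz0 : z ∈ 𝒜 0 := hIsub hz
    have hs₀mem : y * x₁ * z ∈ 𝒜 1 := by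
      have h := SetLike.mul_mem_graded (SetLike.mul_mem_graded hy0 hx₁) hz0
      have h2 : (0 + 1 + 0 : ZMod 2) = 1 := by decide
      rwa [h2] at h
    have h1even : ∀ b ∈ 𝒜 0, ((x₁ * x₁) * b - b * (x₁ * x₁)) * (y * x₁ * z) = 0 := by
      intro b hb
      have hby : b * y ∈ I := (hImul b hb y hy).1
      rw [sub_mul, sub_eq_zero]
      calc (x₁ * x₁) * b * (y * x₁ * z)
          = ((x₁ * x₁) * (b * y)) * (x₁ * z) := by simp only [mul_assoc]
        _ = ((b * y) * (x₁ * x₁)) * (x₁ * z) := by rw [hcomm _ hby]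
        _ = b * (((x₁ * x₁) * y) * (x₁ * z)) := by
            rw [hcomm _ hy]; simp only [mul_assoc]
        _ = b * (x₁ * x₁) * (y * x₁ * z) := by simp only [mul_assoc]
    have h1odd : ∀ b ∈ 𝒜 1, ((x₁ * x₁) * b - b * (x₁ * x₁)) * (y * x₁ * z) = 0 := by
      intro b hb
      have hb₀ : b * y * x₁ ∈ 𝒜 0 := by
        have h := SetLike.mul_mem_graded (SetLike.mul_mem_graded hb hy0) hx₁
        have h2 : (1 + 0 + 1 : ZMod 2) = 0 := by decide
        rwa [h2] at h
      have hw : (b * y * x₁) * z ∈ I := (hImul _ hb₀ z hz).1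
      rw [sub_mul, sub_eq_zero]
      calc (x₁ * x₁) * b * (y * x₁ * z)
          = (x₁ * x₁) * ((b * y * x₁) * z) := by simp only [mul_assoc]
        _ = ((b * y * x₁) * z) * (x₁ * x₁) := hcomm _ hw
        _ = b * (y * (x₁ * (z * (x₁ * x₁)))) := by simp only [mul_assoc]
        _ = b * (y * (x₁ * ((x₁ * x₁) * z))) := by rw [hcomm _ hz]
        _ = b * ((y * (x₁ * x₁)) * (x₁ * z)) := by simp only [mul_assoc]
        _ = b * (((x₁ * x₁) * y) * (x₁ * z)) := by rw [hcomm _ hy]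
        _ = b * (x₁ * x₁) * (y * x₁ * z) := by simp only [mul_assoc]
    have h1 : ∀ w : A, ((x₁ * x₁) * w - w * (x₁ * x₁)) * (y * x₁ * z) = 0 := by
      intro w
      rw [decompose_two 𝒜 w]
      have e : (x₁ * x₁) * (((DirectSum.decompose 𝒜 w) 0 : A) + ((DirectSum.decompose 𝒜 w) 1 : A))
            - (((DirectSum.decompose 𝒜 w) 0 : A) + ((DirectSum.decompose 𝒜 w) 1 : A)) * (x₁ * x₁)
          = ((x₁ * x₁) * ((DirectSum.decompose 𝒜 w) 0 : A)
              - ((DirectSum.decompose 𝒜 w) 0 : A) * (x₁ * x₁))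
            + ((x₁ * x₁) * ((DirectSum.decompose 𝒜 w) 1 : A)
              - ((DirectSum.decompose 𝒜 w) 1 : A) * (x₁ * x₁)) := by noncomm_ring
      rw [e, add_mul, h1even _ (SetLike.coe_mem _), h1odd _ (SetLike.coe_mem _), add_zero]
    have h2 : ∀ a u : A, ((x₁ * x₁) * a - a * (x₁ * x₁)) * u * (y * x₁ * z) = 0 := by
      intro a u
      have e : ((x₁ * x₁) * a - a * (x₁ * x₁)) * u * (y * x₁ * z)
          = ((x₁ * x₁) * (a * u) - (a * u) * (x₁ * x₁)) * (y * x₁ * z)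
            - a * (((x₁ * x₁) * u - u * (x₁ * x₁)) * (y * x₁ * z)) := by noncomm_ring
      rw [e, h1 (a * u), h1 u, mul_zero, sub_zero]
    have dhom : ∀ (i : ZMod 2) (a : A), a ∈ 𝒜 i → (x₁ * x₁) * a - a * (x₁ * x₁) = 0 := by
      intro i a ha
      have hca : (x₁ * x₁) * a ∈ 𝒜 i := by
        have h := SetLike.mul_mem_graded hc0 ha; rwa [zero_add] at h
      have hac : a * (x₁ * x₁) ∈ 𝒜 i := by
        have h := SetLike.mul_mem_graded ha hc0; rwa [add_zero] at h
      rcases superPrime_elem 𝒜 hprime (Submodule.sub_mem _ hca hac) hs₀mem (h2 a) with h | h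
      · exact h
      · exact absurd h hs0ne
    rw [Subring.mem_center_iff]
    intro g
    have h0 := dhom 0 _ (SetLike.coe_mem ((DirectSum.decompose 𝒜 g) 0))
    have h1' := dhom 1 _ (SetLike.coe_mem ((DirectSum.decompose 𝒜 g) 1))
    have key : (x₁ * x₁) * g - g * (x₁ * x₁) = 0 := by
      conv_lhs => rw [decompose_two 𝒜 g]
      have e : (x₁ * x₁) * (((DirectSum.decompose 𝒜 g) 0 : A) + ((DirectSum.decompose 𝒜 g) 1 : A))
            - (((DirectSum.decompose 𝒜 g) 0 : A) + ((DirectSum.decompose 𝒜 g) 1 : A)) * (x₁ * x₁)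
          = ((x₁ * x₁) * ((DirectSum.decompose 𝒜 g) 0 : A)
              - ((DirectSum.decompose 𝒜 g) 0 : A) * (x₁ * x₁))
            + ((x₁ * x₁) * ((DirectSum.decompose 𝒜 g) 1 : A)
              - ((DirectSum.decompose 𝒜 g) 1 : A) * (x₁ * x₁)) := by noncomm_ring
      rw [e, h0, h1', add_zero]
    have := sub_eq_zero.mp key
    exact this.symm
end

section
/- Let A be a nontrivial semiprime superalgebra with superinvolution * over a commutative unital ring φ with 1/2 ∈ φ, and let U be a Lie ideal of K such that [u∘v, w] = 0 for all homogeneous u, v, w ∈ U. Then u∘v = 0 for every u, v ∈ U₁, where U₁ = U ∩ A₁. -/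
open DirectSum

variable {φ A : Type*}

section AuxLemmas

private lemma ssign_zero_left' (m : ZMod 2) : ssign 0 m = 1 := by
  unfold ssign
  rw [if_neg]
  rintro ⟨h0, -⟩
  exact (by decide : ¬((0 : ZMod 2) = 1)) h0

private lemma ssign_one_zero' : ssign 1 0 = 1 := by
  unfold ssign
  rw [if_neg]
  rintro ⟨-, h0⟩
  exact (by decide : ¬((0 : ZMod 2) = 1)) h0

private lemma ssign_one_one' : ssign 1 1 = -1 := by
  unfold ssign
  rw [if_pos ⟨rfl, rfl⟩]

private lemma half2' (φ : Type*) {A : Type*} [CommRing φ] [Invertible (2 : φ)] [Ring A]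
    [Algebra φ A] {x : A} (h : x + x = 0) : x = 0 := by
  have h2 : (2 : φ) • x = 0 := by rw [two_smul]; exact h
  calc x = ⅟(2:φ) • ((2:φ) • x) := by rw [smul_smul, invOf_mul_self, one_smul]
  _ = 0 := by rw [h2, smul_zero]

/-- From the quadratic identity hypotheses, the fourth power of `a = uv - vu` vanishes. -/
private lemma quartic_zero (φ : Type*) {A : Type*} [CommRing φ] [Invertible (2 : φ)] [Ring A]
    [Algebra φ A] (u v : A)
    (k1 : (u*v - v*u)*u = u*(u*v - v*u))
    (k2 : (u*v - v*u)*v = v*(u*v - v*u))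
    (n1 : u*u*u*u = 0)
    (n3 : u*u*u*v + v*(u*u*u) = 0)
    (n4 : v*v*v*u + u*(v*v*v) = 0)
    (e1 : u*u*u*v + u*u*v*u + u*v*u*u + v*(u*u*u) = 0)
    (d1 : u*u*v*v + v*u*u*v + v*u*u*v + v*v*u*u = 0) :
    ((u*v - v*u)*(u*v - v*u)) * ((u*v - v*u)*(u*v - v*u)) = 0 := by
  have g1 : u*u*v*u + u*v*u*u = 0 := by
    have e : u*u*v*u + u*v*u*u
        = (u*u*u*v + u*u*v*u + u*v*u*u + v*(u*u*u)) - (u*u*u*v + v*(u*u*u)) := by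
      noncomm_ring
    rw [e, e1, n3, sub_zero]
  have ha2 : (u*v - v*u)*(u*v - v*u) + (v*u*u*v + v*u*u*v) = 0 := by
    apply half2' φ
    have e : ((u*v - v*u)*(u*v - v*u) + (v*u*u*v + v*u*u*v))
          + ((u*v - v*u)*(u*v - v*u) + (v*u*u*v + v*u*u*v))
        = (((u*v - v*u)*u)*v - (u*(u*v - v*u))*v)
          - (v*((u*v - v*u)*u) - v*(u*(u*v - v*u)))
          - ((((u*v - v*u)*v)*u - (v*(u*v - v*u))*u)
            + (((u*v - v*u)*v)*u - (v*(u*v - v*u))*u))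
          + (u*u*v*v + v*u*u*v + v*u*u*v + v*v*u*u) := by noncomm_ring
    rw [e, k1, k2, d1]
    noncomm_ring
  have hW : (v*u*u*v)*(v*u*u*v) = 0 := by
    apply half2' φ
    have e : (v*u*u*v)*(v*u*u*v) + (v*u*u*v)*(v*u*u*v)
        = -((u*u*u*u)*(v*v*v*v)) - (v*v)*(u*u*u*u)*(v*v)
          + u*(u*u*u*v + v*(u*u*u))*(v*v*v)
          - (u*v)*(u*u*u*v + v*(u*u*u))*(v*v)
          + (u*v*v)*(u*u*u*v + v*(u*u*u))*v
          + (v*v*u)*(u*u*u*v + v*(u*u*u))*v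
          - u*(v*v*v*u + u*(v*v*v))*(u*u*v)
          - (v*v)*(u*u*v*u + u*v*u*u)*(u*v)
          + (u*u*v*v + v*u*u*v + v*u*u*v + v*v*u*u)*(v*u*u*v) := by noncomm_ring
    rw [e, n1, n3, n4, g1, d1]
    noncomm_ring
  have e4 : ((u*v - v*u)*(u*v - v*u)) * ((u*v - v*u)*(u*v - v*u))
      = ((u*v - v*u)*(u*v - v*u) + (v*u*u*v + v*u*u*v)) * ((u*v - v*u)*(u*v - v*u))
        - (v*u*u*v + v*u*u*v) * ((u*v - v*u)*(u*v - v*u) + (v*u*u*v + v*u*u*v))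
        + ((v*u*u*v)*(v*u*u*v) + (v*u*u*v)*(v*u*u*v)
          + (v*u*u*v)*(v*u*u*v) + (v*u*u*v)*(v*u*u*v)) := by noncomm_ring
  rw [e4, ha2, hW]
  noncomm_ring

section Graded
variable {φ A : Type*} [CommRing φ] [Ring A] [Algebra φ A]
variable (𝒜 : ZMod 2 → Submodule φ A) [GradedAlgebra 𝒜]

private lemma sbr_mem' {i j : ZMod 2} {x y : A} (hx : x ∈ 𝒜 i) (hy : y ∈ 𝒜 j) :
    sbr i j x y ∈ 𝒜 (i + j) := by
  have h1 : x * y ∈ 𝒜 (i + j) := SetLike.mul_mem_graded hx hy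
  have h2 : y * x ∈ 𝒜 (i + j) := by
    have := SetLike.mul_mem_graded hy hx
    rwa [add_comm] at this
  exact sub_mem h1 (zsmul_mem h2 _)

private lemma decompose01 (x : A) :
    ((DirectSum.decompose 𝒜 x 0 : A)) + (DirectSum.decompose 𝒜 x 1 : A) = x := by
  classical
  have h := DirectSum.sum_support_decompose 𝒜 x
  have h2 : ∑ i ∈ DFinsupp.support (DirectSum.decompose 𝒜 x), ((DirectSum.decompose 𝒜 x i : A))
      = ∑ i : ZMod 2, ((DirectSum.decompose 𝒜 x i : A)) := by
    refine Finset.sum_subset (Finset.subset_univ _) ?_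
    intro i _ hi
    simpa using DFinsupp.notMem_support_iff.mp hi
  have h3 : (Finset.univ : Finset (ZMod 2)) = {0, 1} := by decide
  rw [h2, h3, Finset.sum_insert (by decide), Finset.sum_singleton] at h
  exact h

private lemma dec_add' (x y : A) (i : ZMod 2) :
    (DirectSum.decompose 𝒜 (x + y) i : A)
      = (DirectSum.decompose 𝒜 x i : A) + (DirectSum.decompose 𝒜 y i : A) := by
  rw [DirectSum.decompose_add, DirectSum.add_apply]; rfl

/-- If `c` is even and `c A c = 0`, then `c = 0` in a semiprime superalgebra. -/
private lemma sandwich_zero (hsemi : SuperSemiprime 𝒜) {c : A} (hc : c ∈ 𝒜 0)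
    (hz : ∀ z : A, c * z * c = 0) : c = 0 := by
  classical
  set S : Set A := {w | ∃ x y : A, w = x * c * y} with hS
  set J : Submodule φ A := Submodule.span φ S with hJdef
  have genmem : ∀ x y : A, x * c * y ∈ J := fun x y => Submodule.subset_span ⟨x, y, rfl⟩
  have hml : ∀ (b x : A), x ∈ J → b * x ∈ J := by
    intro b x hx
    refine Submodule.span_induction (fun w hw => ?_) ?_ ?_ ?_ hx
    · obtain ⟨x1, y1, rfl⟩ := hw
      have e : b * (x1 * c * y1) = (b * x1) * c * y1 := by noncomm_ring
      rw [e]; exact genmem _ _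
    · rw [mul_zero]; exact zero_mem _
    · intro z w _ _ hz' hw'
      rw [mul_add]; exact add_mem hz' hw'
    · intro r z _ hz'
      rw [mul_smul_comm]; exact Submodule.smul_mem _ _ hz'
  have hmr : ∀ (b x : A), x ∈ J → x * b ∈ J := by
    intro b x hx
    refine Submodule.span_induction (fun w hw => ?_) ?_ ?_ ?_ hx
    · obtain ⟨x1, y1, rfl⟩ := hw
      have e : (x1 * c * y1) * b = x1 * c * (y1 * b) := by noncomm_ring
      rw [e]; exact genmem _ _
    · rw [zero_mul]; exact zero_mem _
    · intro z w _ _ hz' hw'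
      rw [add_mul]; exact add_mem hz' hw'
    · intro r z _ hz'
      rw [smul_mul_assoc]; exact Submodule.smul_mem _ _ hz'
  have hgr : ∀ (i : ZMod 2), ∀ x ∈ J, (DirectSum.decompose 𝒜 x i : A) ∈ J := by
    intro i x hx
    refine Submodule.span_induction (fun w hw => ?_) ?_ ?_ ?_ hx
    · obtain ⟨x1, y1, rfl⟩ := hw
      have hhom : ∀ (p q : ZMod 2) (xp yq : A), xp ∈ 𝒜 p → yq ∈ 𝒜 q →
          (DirectSum.decompose 𝒜 (xp * c * yq) i : A) ∈ J := by
        intro p q xp yq hxp hyq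
        have h1 : xp * c ∈ 𝒜 p := by
          have := SetLike.mul_mem_graded hxp hc
          rwa [add_zero] at this
        have hmem : xp * c * yq ∈ 𝒜 (p + q) := SetLike.mul_mem_graded h1 hyq
        by_cases hpq : p + q = i
        · subst hpq
          rw [DirectSum.decompose_of_mem_same 𝒜 hmem]
          exact genmem _ _
        · rw [DirectSum.decompose_of_mem_ne 𝒜 hmem hpq]
          exact zero_mem _
      have ex : x1 * c * y1
          = ((DirectSum.decompose 𝒜 x1 0 : A) * c * (DirectSum.decompose 𝒜 y1 0 : A)
            + (DirectSum.decompose 𝒜 x1 0 : A) * c * (DirectSum.decompose 𝒜 y1 1 : A))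
          + ((DirectSum.decompose 𝒜 x1 1 : A) * c * (DirectSum.decompose 𝒜 y1 0 : A)
            + (DirectSum.decompose 𝒜 x1 1 : A) * c * (DirectSum.decompose 𝒜 y1 1 : A)) := by
        conv_lhs => rw [← decompose01 𝒜 x1, ← decompose01 𝒜 y1]
        noncomm_ring
      rw [ex, dec_add', dec_add', dec_add']
      refine add_mem (add_mem ?_ ?_) (add_mem ?_ ?_)
      · exact hhom 0 0 _ _ (SetLike.coe_mem _) (SetLike.coe_mem _)
      · exact hhom 0 1 _ _ (SetLike.coe_mem _) (SetLike.coe_mem _)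
      · exact hhom 1 0 _ _ (SetLike.coe_mem _) (SetLike.coe_mem _)
      · exact hhom 1 1 _ _ (SetLike.coe_mem _) (SetLike.coe_mem _)
    · rw [DirectSum.decompose_zero]; simp only [DirectSum.zero_apply, ZeroMemClass.coe_zero]
      exact zero_mem _
    · intro z w _ _ hz' hw'
      rw [dec_add']; exact add_mem hz' hw'
    · intro r z _ hz'
      have e : (DirectSum.decompose 𝒜 (r • z) i : A) = r • (DirectSum.decompose 𝒜 z i : A) := by
        rw [DirectSum.decompose_smul]; rfl
      rw [e]; exact Submodule.smul_mem _ _ hz'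
  have hsq : ∀ x ∈ J, ∀ y ∈ J, x * y = 0 := by
    intro x hx y hy
    refine Submodule.span_induction₂ (p := fun z w _ _ => z * w = 0)
      (fun z w hzS hwS => ?_) ?_ ?_ ?_ ?_ ?_ ?_ hx hy
    · obtain ⟨x1, y1, rfl⟩ := hzS
      obtain ⟨x2, y2, rfl⟩ := hwS
      have e : (x1 * c * y1) * (x2 * c * y2) = x1 * (c * (y1 * x2) * c) * y2 := by noncomm_ring
      rw [e, hz (y1 * x2), mul_zero, zero_mul]
    · intro y' _; rw [zero_mul]
    · intro x' _; rw [mul_zero]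
    · intro x' y' z' _ _ _ h1 h2; rw [add_mul, h1, h2, add_zero]
    · intro x' y' z' _ _ _ h1 h2; rw [mul_add, h1, h2, add_zero]
    · intro r x' y' _ _ h1; rw [smul_mul_assoc, h1, smul_zero]
    · intro r x' y' _ _ h1; rw [mul_smul_comm, h1, smul_zero]
  have hbot : J = ⊥ := hsemi ⟨J, hml, hmr, hgr⟩ hsq
  have hcJ : c ∈ J := by
    have e : c = 1 * c * 1 := by simp
    rw [e]; exact genmem 1 1
  rw [hbot] at hcJ
  simp only [Submodule.mem_bot] at hcJ
  exact hcJ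

end Graded

end AuxLemmas

/-- **(Lemma 2.2 (ii).)** Let `A` be a nontrivial semiprime superalgebra with superinvolution
over a commutative ring `φ` with `½ ∈ φ`, and let `U` be a Lie ideal of `K` with
`[U∘U, U] = 0`. Then `u∘v = 0` for every `u, v ∈ U₁`. -/
theorem circ_odd_zero_of_circ_bracket_zero
    {φ A : Type*} [CommRing φ] [Invertible (2 : φ)] [Ring A] [Algebra φ A]
    (𝒜 : ZMod 2 → Submodule φ A) [GradedAlgebra 𝒜]
    (hsemi : SuperSemiprime 𝒜) (hnontriv : 𝒜 1 ≠ ⊥)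
    (σ : Superinvolution 𝒜) (U : LieIdealOfSkew 𝒜 σ)
    (hU : ∀ (i j k : ZMod 2) (u v w : A), u ∈ U.carrier → u ∈ 𝒜 i → v ∈ U.carrier → v ∈ 𝒜 j →
      w ∈ U.carrier → w ∈ 𝒜 k → sbr (i + j) k (scirc i j u v) w = 0) :
    ∀ u v : A, u ∈ U.carrier → u ∈ 𝒜 1 → v ∈ U.carrier → v ∈ 𝒜 1 →
      scirc 1 1 u v = 0 := by
  intro u v huU hu1 hvU hv1
  have hσu : σ.toFun u = -u := U.skew u huU
  have hσv : σ.toFun v = -v := U.skew v hvU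
  have hmul11 : ∀ {x y : A}, x ∈ 𝒜 1 → y ∈ 𝒜 1 → x * y ∈ 𝒜 0 := by
    intro x y hx hy
    have := SetLike.mul_mem_graded hx hy
    rwa [show ((1:ZMod 2) + 1) = 0 by decide] at this
  have hmul10 : ∀ {x y : A}, x ∈ 𝒜 1 → y ∈ 𝒜 0 → x * y ∈ 𝒜 1 := by
    intro x y hx hy
    have := SetLike.mul_mem_graded hx hy
    rwa [show ((1:ZMod 2) + 0) = 1 by decide] at this
  have hmul01 : ∀ {x y : A}, x ∈ 𝒜 0 → y ∈ 𝒜 1 → x * y ∈ 𝒜 1 := by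
    intro x y hx hy
    have := SetLike.mul_mem_graded hx hy
    rwa [show ((0:ZMod 2) + 1) = 1 by decide] at this
  set a : A := u*v - v*u with ha_def
  have ha0 : a ∈ 𝒜 0 := sub_mem (hmul11 hu1 hv1) (hmul11 hv1 hu1)
  -- `a` commutes with every homogeneous element of `U`
  have comm_a : ∀ (m : ZMod 2) (w : A), w ∈ U.carrier → w ∈ 𝒜 m → a * w = w * a := by
    intro m w hwU hwm
    have h := hU 1 1 m u v w huU hu1 hvU hv1 hwU hwm
    rw [show ((1:ZMod 2) + 1) = 0 by decide] at h
    have e : sbr 0 m (scirc 1 1 u v) w = a * w - w * a := by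
      simp only [sbr, scirc, ssign_zero_left', ssign_one_one', one_smul, neg_smul, ha_def]
      noncomm_ring
    rw [e] at h
    exact sub_eq_zero.mp h
  have k1 : a * u = u * a := comm_a 1 u huU hu1
  have k2 : a * v = v * a := comm_a 1 v hvU hv1
  -- U-elements 2u², 2v²
  have hPU : sbr 1 1 u u ∈ U.carrier := U.bracket_mem 1 1 u u huU hu1 hu1 hσu
  have hQU : sbr 1 1 v v ∈ U.carrier := U.bracket_mem 1 1 v v hvU hv1 hv1 hσv
  have hP0 : sbr 1 1 u u ∈ 𝒜 0 := by
    have := sbr_mem' 𝒜 hu1 hu1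
    rwa [show ((1:ZMod 2) + 1) = 0 by decide] at this
  have hQ0 : sbr 1 1 v v ∈ 𝒜 0 := by
    have := sbr_mem' 𝒜 hv1 hv1
    rwa [show ((1:ZMod 2) + 1) = 0 by decide] at this
  -- instance n1 : u⁴ = 0
  have hn1 : u*u*u*u = 0 := by
    have h := hU 1 0 1 u (sbr 1 1 u u) u huU hu1 hPU hP0 huU hu1
    rw [show ((1:ZMod 2) + 0) = 1 by decide] at h
    refine half2' φ (half2' φ (half2' φ ?_))
    have e : sbr 1 1 (scirc 1 0 u (sbr 1 1 u u)) u
        = ((u*u*u*u + u*u*u*u) + (u*u*u*u + u*u*u*u))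
          + ((u*u*u*u + u*u*u*u) + (u*u*u*u + u*u*u*u)) := by
      simp only [sbr, scirc, ssign_one_one', ssign_one_zero', one_smul, neg_smul]
      noncomm_ring
    rw [← e]
    exact h
  -- instance n3 : u³v + vu³ = 0
  have hn3 : u*u*u*v + v*(u*u*u) = 0 := by
    have h := hU 1 0 1 u (sbr 1 1 u u) v huU hu1 hPU hP0 hvU hv1
    rw [show ((1:ZMod 2) + 0) = 1 by decide] at h
    refine half2' φ (half2' φ ?_)
    have e : sbr 1 1 (scirc 1 0 u (sbr 1 1 u u)) v
        = ((u*u*u*v + v*(u*u*u)) + (u*u*u*v + v*(u*u*u)))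
          + ((u*u*u*v + v*(u*u*u)) + (u*u*u*v + v*(u*u*u))) := by
      simp only [sbr, scirc, ssign_one_one', ssign_one_zero', one_smul, neg_smul]
      noncomm_ring
    rw [← e]
    exact h
  -- instance n4 : v³u + uv³ = 0
  have hn4 : v*v*v*u + u*(v*v*v) = 0 := by
    have h := hU 1 0 1 v (sbr 1 1 v v) u hvU hv1 hQU hQ0 huU hu1
    rw [show ((1:ZMod 2) + 0) = 1 by decide] at h
    refine half2' φ (half2' φ ?_)
    have e : sbr 1 1 (scirc 1 0 v (sbr 1 1 v v)) u
        = ((v*v*v*u + u*(v*v*v)) + (v*v*v*u + u*(v*v*v)))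
          + ((v*v*v*u + u*(v*v*v)) + (v*v*v*u + u*(v*v*v))) := by
      simp only [sbr, scirc, ssign_one_one', ssign_one_zero', one_smul, neg_smul]
      noncomm_ring
    rw [← e]
    exact h
  -- instance e1
  have he1 : u*u*u*v + u*u*v*u + u*v*u*u + v*(u*u*u) = 0 := by
    have h := hU 0 1 1 (sbr 1 1 u u) v u hPU hP0 hvU hv1 huU hu1
    rw [show ((0:ZMod 2) + 1) = 1 by decide] at h
    refine half2' φ ?_
    have e : sbr 1 1 (scirc 0 1 (sbr 1 1 u u) v) u
        = (u*u*u*v + u*u*v*u + u*v*u*u + v*(u*u*u))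
          + (u*u*u*v + u*u*v*u + u*v*u*u + v*(u*u*u)) := by
      simp only [sbr, scirc, ssign_one_one', ssign_zero_left', one_smul, neg_smul]
      noncomm_ring
    rw [← e]
    exact h
  -- instance d1
  have hd1 : u*u*v*v + v*u*u*v + v*u*u*v + v*v*u*u = 0 := by
    have h := hU 0 1 1 (sbr 1 1 u u) v v hPU hP0 hvU hv1 hvU hv1
    rw [show ((0:ZMod 2) + 1) = 1 by decide] at h
    refine half2' φ ?_
    have e : sbr 1 1 (scirc 0 1 (sbr 1 1 u u) v) v
        = (u*u*v*v + v*u*u*v + v*u*u*v + v*v*u*u)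
          + (u*u*v*v + v*u*u*v + v*u*u*v + v*v*u*u) := by
      simp only [sbr, scirc, ssign_one_one', ssign_zero_left', one_smul, neg_smul]
      noncomm_ring
    rw [← e]
    exact h
  -- a⁴ = 0
  have k1' : (u*v - v*u)*u = u*(u*v - v*u) := k1
  have k2' : (u*v - v*u)*v = v*(u*v - v*u) := k2
  have h4 : (a*a)*(a*a) = 0 := quartic_zero φ u v k1' k2' hn1 hn3 hn4 he1 hd1
  -- the inner double-commutator vanishes : skew case
  have ddk : ∀ (j : ZMod 2) (k : A), k ∈ 𝒜 j → σ.toFun k = -k →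
      a*(a*k - k*a) - (a*k - k*a)*a = 0 := by
    intro j k hkj hks
    have hw1U : sbr 1 j u k ∈ U.carrier := U.bracket_mem 1 j u k huU hu1 hkj hks
    have hw2U : sbr 1 j v k ∈ U.carrier := U.bracket_mem 1 j v k hvU hv1 hkj hks
    have hw1m : sbr 1 j u k ∈ 𝒜 (1 + j) := sbr_mem' 𝒜 hu1 hkj
    have hw2m : sbr 1 j v k ∈ 𝒜 (1 + j) := sbr_mem' 𝒜 hv1 hkj
    have c1 := comm_a (1 + j) _ hw1U hw1m
    have c2 := comm_a (1 + j) _ hw2U hw2m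
    rcases (by decide : ∀ jj : ZMod 2, jj = 0 ∨ jj = 1) j with rfl | rfl
    · -- j = 0
      have eb1 : sbr 1 (0:ZMod 2) u k = u*k - k*u := by
        simp only [sbr, ssign_one_zero', one_smul]
      have eb2 : sbr 1 (0:ZMod 2) v k = v*k - k*v := by
        simp only [sbr, ssign_one_zero', one_smul]
      rw [eb1] at c1
      rw [eb2] at c2
      have hu_c : u*(a*k - k*a) - (a*k - k*a)*u = 0 := by
        have e : u*(a*k - k*a) - (a*k - k*a)*u
            = (a*(u*k - k*u) - (u*k - k*u)*a) - ((a*u - u*a)*k - k*(a*u - u*a)) := by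
          noncomm_ring
        rw [e, c1, k1]
        noncomm_ring
      have hv_c : v*(a*k - k*a) - (a*k - k*a)*v = 0 := by
        have e : v*(a*k - k*a) - (a*k - k*a)*v
            = (a*(v*k - k*v) - (v*k - k*v)*a) - ((a*v - v*a)*k - k*(a*v - v*a)) := by
          noncomm_ring
        rw [e, c2, k2]
        noncomm_ring
      have e : a*(a*k - k*a) - (a*k - k*a)*a
          = (u*(v*(a*k - k*a) - (a*k - k*a)*v) - (v*(a*k - k*a) - (a*k - k*a)*v)*u)
            + ((u*(a*k - k*a) - (a*k - k*a)*u)*v - v*(u*(a*k - k*a) - (a*k - k*a)*u)) := by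
        rw [ha_def]; noncomm_ring
      rw [e, hu_c, hv_c]
      noncomm_ring
    · -- j = 1
      have eb1 : sbr 1 (1:ZMod 2) u k = u*k + k*u := by
        simp only [sbr, ssign_one_one', neg_smul, one_smul, sub_neg_eq_add]
      have eb2 : sbr 1 (1:ZMod 2) v k = v*k + k*v := by
        simp only [sbr, ssign_one_one', neg_smul, one_smul, sub_neg_eq_add]
      rw [eb1] at c1
      rw [eb2] at c2
      have hu_c : u*(a*k - k*a) + (a*k - k*a)*u = 0 := by
        have e : u*(a*k - k*a) + (a*k - k*a)*u
            = (a*(u*k + k*u) - (u*k + k*u)*a) - ((a*u - u*a)*k + k*(a*u - u*a)) := by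
          noncomm_ring
        rw [e, c1, k1]
        noncomm_ring
      have hv_c : v*(a*k - k*a) + (a*k - k*a)*v = 0 := by
        have e : v*(a*k - k*a) + (a*k - k*a)*v
            = (a*(v*k + k*v) - (v*k + k*v)*a) - ((a*v - v*a)*k + k*(a*v - v*a)) := by
          noncomm_ring
        rw [e, c2, k2]
        noncomm_ring
      have e : a*(a*k - k*a) - (a*k - k*a)*a
          = u*(v*(a*k - k*a) + (a*k - k*a)*v) - (u*(a*k - k*a) + (a*k - k*a)*u)*v
            - v*(u*(a*k - k*a) + (a*k - k*a)*u) + (v*(a*k - k*a) + (a*k - k*a)*v)*u := by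
        rw [ha_def]; noncomm_ring
      rw [e, hu_c, hv_c]
      noncomm_ring
  -- the inner double-commutator vanishes : symmetric case
  have ddh : ∀ (i : ZMod 2) (h : A), h ∈ 𝒜 i → σ.toFun h = h →
      a*(a*h - h*a) - (a*h - h*a)*a = 0 := by
    intro i h hhi hhs
    rcases (by decide : ∀ ii : ZMod 2, ii = 0 ∨ ii = 1) i with rfl | rfl
    · -- i = 0
      have hk1m : v*h + h*v ∈ 𝒜 1 := add_mem (hmul10 hv1 hhi) (hmul01 hhi hv1)
      have hk2m : u*h + h*u ∈ 𝒜 1 := add_mem (hmul10 hu1 hhi) (hmul01 hhi hu1)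
      have hk1s : σ.toFun (v*h + h*v) = -(v*h + h*v) := by
        have h1 : σ.toFun (v*h) = σ.toFun h * σ.toFun v := by
          have := σ.mul_rev 1 0 v hv1 h hhi
          rwa [ssign_one_zero', one_smul] at this
        have h2 : σ.toFun (h*v) = σ.toFun v * σ.toFun h := by
          have := σ.mul_rev 0 1 h hhi v hv1
          rwa [ssign_zero_left', one_smul] at this
        rw [map_add, h1, h2, hhs, hσv]
        noncomm_ring
      have hk2s : σ.toFun (u*h + h*u) = -(u*h + h*u) := by
        have h1 : σ.toFun (u*h) = σ.toFun h * σ.toFun u := by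
          have := σ.mul_rev 1 0 u hu1 h hhi
          rwa [ssign_one_zero', one_smul] at this
        have h2 : σ.toFun (h*u) = σ.toFun u * σ.toFun h := by
          have := σ.mul_rev 0 1 h hhi u hu1
          rwa [ssign_zero_left', one_smul] at this
        rw [map_add, h1, h2, hhs, hσu]
        noncomm_ring
      have hE2U : sbr 1 1 u (v*h + h*v) ∈ U.carrier :=
        U.bracket_mem 1 1 u (v*h + h*v) huU hu1 hk1m hk1s
      have hE3U : sbr 1 1 v (u*h + h*u) ∈ U.carrier :=
        U.bracket_mem 1 1 v (u*h + h*u) hvU hv1 hk2m hk2s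
      have hE2m : sbr 1 1 u (v*h + h*v) ∈ 𝒜 0 := by
        have := sbr_mem' 𝒜 hu1 hk1m
        rwa [show ((1:ZMod 2) + 1) = 0 by decide] at this
      have hE3m : sbr 1 1 v (u*h + h*u) ∈ 𝒜 0 := by
        have := sbr_mem' 𝒜 hv1 hk2m
        rwa [show ((1:ZMod 2) + 1) = 0 by decide] at this
      have cE2 := comm_a 0 _ hE2U hE2m
      have cE3 := comm_a 0 _ hE3U hE3m
      have eE2 : sbr 1 1 u (v*h + h*v) = u*(v*h + h*v) + (v*h + h*v)*u := by
        simp only [sbr, ssign_one_one', neg_smul, one_smul, sub_neg_eq_add]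
      have eE3 : sbr 1 1 v (u*h + h*u) = v*(u*h + h*u) + (u*h + h*u)*v := by
        simp only [sbr, ssign_one_one', neg_smul, one_smul, sub_neg_eq_add]
      rw [eE2] at cE2
      rw [eE3] at cE3
      have e : a*(a*h - h*a) - (a*h - h*a)*a
          = (a*(u*(v*h + h*v) + (v*h + h*v)*u) - (u*(v*h + h*v) + (v*h + h*v)*u)*a)
            - (a*(v*(u*h + h*u) + (u*h + h*u)*v) - (v*(u*h + h*u) + (u*h + h*u)*v)*a) := by
        rw [ha_def]; noncomm_ring
      rw [e, cE2, cE3]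
      noncomm_ring
    · -- i = 1
      have hk1m : v*h - h*v ∈ 𝒜 0 := sub_mem (hmul11 hv1 hhi) (hmul11 hhi hv1)
      have hk2m : u*h - h*u ∈ 𝒜 0 := sub_mem (hmul11 hu1 hhi) (hmul11 hhi hu1)
      have hk1s : σ.toFun (v*h - h*v) = -(v*h - h*v) := by
        have h1 : σ.toFun (v*h) = -(σ.toFun h * σ.toFun v) := by
          have := σ.mul_rev 1 1 v hv1 h hhi
          rwa [ssign_one_one', neg_smul, one_smul] at this
        have h2 : σ.toFun (h*v) = -(σ.toFun v * σ.toFun h) := by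
          have := σ.mul_rev 1 1 h hhi v hv1
          rwa [ssign_one_one', neg_smul, one_smul] at this
        rw [map_sub, h1, h2, hhs, hσv]
        noncomm_ring
      have hk2s : σ.toFun (u*h - h*u) = -(u*h - h*u) := by
        have h1 : σ.toFun (u*h) = -(σ.toFun h * σ.toFun u) := by
          have := σ.mul_rev 1 1 u hu1 h hhi
          rwa [ssign_one_one', neg_smul, one_smul] at this
        have h2 : σ.toFun (h*u) = -(σ.toFun u * σ.toFun h) := by
          have := σ.mul_rev 1 1 h hhi u hu1
          rwa [ssign_one_one', neg_smul, one_smul] at this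
        rw [map_sub, h1, h2, hhs, hσu]
        noncomm_ring
      have hE2U : sbr 1 0 u (v*h - h*v) ∈ U.carrier :=
        U.bracket_mem 1 0 u (v*h - h*v) huU hu1 hk1m hk1s
      have hE3U : sbr 1 0 v (u*h - h*u) ∈ U.carrier :=
        U.bracket_mem 1 0 v (u*h - h*u) hvU hv1 hk2m hk2s
      have hE2m : sbr 1 0 u (v*h - h*v) ∈ 𝒜 1 := by
        have := sbr_mem' 𝒜 hu1 hk1m
        rwa [show ((1:ZMod 2) + 0) = 1 by decide] at this
      have hE3m : sbr 1 0 v (u*h - h*u) ∈ 𝒜 1 := by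
        have := sbr_mem' 𝒜 hv1 hk2m
        rwa [show ((1:ZMod 2) + 0) = 1 by decide] at this
      have cE2 := comm_a 1 _ hE2U hE2m
      have cE3 := comm_a 1 _ hE3U hE3m
      have eE2 : sbr 1 0 u (v*h - h*v) = u*(v*h - h*v) - (v*h - h*v)*u := by
        simp only [sbr, ssign_one_zero', one_smul]
      have eE3 : sbr 1 0 v (u*h - h*u) = v*(u*h - h*u) - (u*h - h*u)*v := by
        simp only [sbr, ssign_one_zero', one_smul]
      rw [eE2] at cE2
      rw [eE3] at cE3
      have e : a*(a*h - h*a) - (a*h - h*a)*a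
          = (a*(u*(v*h - h*v) - (v*h - h*v)*u) - (u*(v*h - h*v) - (v*h - h*v)*u)*a)
            - (a*(v*(u*h - h*u) - (u*h - h*u)*v) - (v*(u*h - h*u) - (u*h - h*u)*v)*a) := by
        rw [ha_def]; noncomm_ring
      rw [e, cE2, cE3]
      noncomm_ring
  -- double commutator vanishes for all x
  have hdd : ∀ x : A, a*(a*x - x*a) - (a*x - x*a)*a = 0 := by
    have base : ∀ (i : ZMod 2) (x : A), x ∈ 𝒜 i → a*(a*x - x*a) - (a*x - x*a)*a = 0 := by
      intro i x hxi
      have hσx : σ.toFun x ∈ 𝒜 i := σ.grading i x hxi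
      have hhp := ddh i (x + σ.toFun x) (add_mem hxi hσx)
        (by rw [map_add, σ.invol]; exact add_comm _ _)
      have hkp := ddk i (x - σ.toFun x) (sub_mem hxi hσx)
        (by rw [map_sub, σ.invol]; exact (neg_sub _ _).symm)
      refine half2' φ ?_
      have e : (a*(a*x - x*a) - (a*x - x*a)*a) + (a*(a*x - x*a) - (a*x - x*a)*a)
          = (a*(a*(x + σ.toFun x) - (x + σ.toFun x)*a) - (a*(x + σ.toFun x) - (x + σ.toFun x)*a)*a)
            + (a*(a*(x - σ.toFun x) - (x - σ.toFun x)*a)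
              - (a*(x - σ.toFun x) - (x - σ.toFun x)*a)*a) := by
        noncomm_ring
      rw [e, hhp, hkp, add_zero]
    have key : ∀ x0 x1 : A, x0 ∈ 𝒜 0 → x1 ∈ 𝒜 1 →
        a*(a*(x0 + x1) - (x0 + x1)*a) - (a*(x0 + x1) - (x0 + x1)*a)*a = 0 := by
      intro x0 x1 h0 h1
      have e : a*(a*(x0 + x1) - (x0 + x1)*a) - (a*(x0 + x1) - (x0 + x1)*a)*a
          = (a*(a*x0 - x0*a) - (a*x0 - x0*a)*a) + (a*(a*x1 - x1*a) - (a*x1 - x1*a)*a) := by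
        noncomm_ring
      rw [e, base 0 x0 h0, base 1 x1 h1, add_zero]
    intro x
    have hx01 := decompose01 𝒜 x
    have := key (DirectSum.decompose 𝒜 x 0 : A) (DirectSum.decompose 𝒜 x 1 : A)
      (SetLike.coe_mem _) (SetLike.coe_mem _)
    rw [hx01] at this
    exact this
  -- descent
  have h2awa : ∀ z : A, a*z*a + a*z*a = a*a*z + z*(a*a) := by
    intro z
    have h := hdd z
    have e : a*z*a + a*z*a - (a*a*z + z*(a*a)) = -(a*(a*z - z*a) - (a*z - z*a)*a) := by
      noncomm_ring
    rw [h, neg_zero] at e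
    exact sub_eq_zero.mp e
  have haa0 : a*a ∈ 𝒜 0 := by
    have := SetLike.mul_mem_graded ha0 ha0
    rwa [show ((0:ZMod 2) + 0) = 0 by decide] at this
  have haaa0 : a*a*a ∈ 𝒜 0 := by
    have := SetLike.mul_mem_graded haa0 ha0
    rwa [show ((0:ZMod 2) + 0) = 0 by decide] at this
  have ha3z : ∀ z : A, (a*a*a)*z*(a*a*a) = 0 := by
    intro z
    refine half2' φ ?_
    have e : (a*a*a)*z*(a*a*a) + (a*a*a)*z*(a*a*a) = a*a*((a*z*a + a*z*a))*(a*a) := by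
      noncomm_ring
    rw [e, h2awa z]
    have e2 : a*a*(a*a*z + z*(a*a))*(a*a) = ((a*a)*(a*a))*(z*(a*a)) + ((a*a)*z)*((a*a)*(a*a)) := by
      noncomm_ring
    rw [e2, h4, zero_mul, mul_zero, add_zero]
  have ha3 : a*a*a = 0 := sandwich_zero 𝒜 hsemi haaa0 ha3z
  have ha2z : ∀ z : A, (a*a)*z*(a*a) = 0 := by
    intro z
    refine half2' φ ?_
    have e : (a*a)*z*(a*a) + (a*a)*z*(a*a) = a*((a*z*a + a*z*a))*a := by
      noncomm_ring
    rw [e, h2awa z]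
    have e2 : a*(a*a*z + z*(a*a))*a = (a*a*a)*(z*a) + (a*z)*((a*a)*a) := by
      noncomm_ring
    have e3 : (a*a)*a = a*a*a := rfl
    rw [e2, e3, ha3, zero_mul, mul_zero, add_zero]
  have ha2 : a*a = 0 := sandwich_zero 𝒜 hsemi haa0 ha2z
  have haz : ∀ z : A, a*z*a = 0 := by
    intro z
    refine half2' φ ?_
    rw [h2awa z, ha2, zero_mul, mul_zero, add_zero]
  have hafin : a = 0 := sandwich_zero 𝒜 hsemi ha0 haz
  have egoal : scirc 1 1 u v = a := by
    rw [ha_def]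
    simp only [scirc, ssign_one_one', neg_smul, one_smul]
    noncomm_ring
  rw [egoal, hafin]
end
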